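/- arXiv:2502.10308 — 3 statements merged into one kernel-verified Lean document; each statement's English description precedes it below -/
import Mathlib

section
/- Let ℓ : ℝ × {0,1} → ℝ be a loss function that is symmetric, i.e., there exists a constant C such that ℓ(z,0) + ℓ(z,1) = C for all z ∈ ℝ. Consider binary classification with uniform label noise of rate η (each label is flipped independently with probability η). Then for any predictor f, the noisy risk satisfies R_η(f) = (1 − 2η)·R(f) + η·C, where R(f) is the clean risk. -/
open MeasureTheory

theorem loss_not_eq_sub_of_sum_eq {α : Type*} {ℓ : α → Bool → ℝ} {C : ℝ}
    (hsym : ∀ z, ℓ z false + ℓ z true = C) (z : α) (b : Bool) :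
    ℓ z (!b) = C - ℓ z b := by
  cases b <;> simp only [Bool.not_false, Bool.not_true] <;> linarith [hsym z]

theorem noisy_loss_eq_of_sum_eq {α : Type*} {ℓ : α → Bool → ℝ} {C : ℝ}
    (hsym : ∀ z, ℓ z false + ℓ z true = C) (η : ℝ) (z : α) (b : Bool) :
    (1 - η) * ℓ z b + η * ℓ z (!b) = (1 - 2 * η) * ℓ z b + η * C := by
  rw [loss_not_eq_sub_of_sum_eq hsym]
  ring

/-- Symmetric loss under uniform label noise: the noisy risk equals
`(1 - 2η) R(f) + η C`. -/
theorem noisy_risk_eq {X : Type*} [MeasurableSpace X]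
    (μ : Measure (X × Bool)) [IsProbabilityMeasure μ]
    (ℓ : ℝ → Bool → ℝ) (C : ℝ) (hsym : ∀ z, ℓ z false + ℓ z true = C)
    (η : ℝ) (f : X → ℝ)
    (hint : Integrable (fun p : X × Bool => ℓ (f p.1) p.2) μ) :
    ∫ p, ((1 - η) * ℓ (f p.1) p.2 + η * ℓ (f p.1) (!p.2)) ∂μ
      = (1 - 2 * η) * ∫ p, ℓ (f p.1) p.2 ∂μ + η * C := by
  simp_rw [noisy_loss_eq_of_sum_eq hsym]
  rw [integral_add (hint.const_mul _) (integrable_const _), integral_const_mul,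
    integral_const, probReal_univ, one_smul]
end

section
/- Let ℓ : ℝ × {0,1} → ℝ be symmetric with constant C (ℓ(z,0)+ℓ(z,1)=C for all z), and let 0 ≤ η < 1/2. Then f* minimizes the clean risk R(f) if and only if f* minimizes the noisy risk R_η(f). In particular, any minimizer of the clean risk is a minimizer of the risk on data corrupted by uniform label noise of rate η < 1/2. -/
open MeasureTheory

/-- With a symmetric loss and uniform label noise of rate `η < 1/2`,
`f*` minimizes the clean risk iff it minimizes the noisy risk. -/
theorem minimizer_clean_iff_noisy {X : Type*} [MeasurableSpace X]
    (μ : Measure (X × Bool)) [IsProbabilityMeasure μ]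
    (ℓ : ℝ → Bool → ℝ) (C : ℝ) (hsym : ∀ z, ℓ z false + ℓ z true = C)
    (η : ℝ) (hη0 : 0 ≤ η) (hη : η < 1 / 2)
    (hint : ∀ f : X → ℝ, Integrable (fun p : X × Bool => ℓ (f p.1) p.2) μ)
    (fstar : X → ℝ) :
    (∀ f : X → ℝ,
        ∫ p, ℓ (fstar p.1) p.2 ∂μ ≤ ∫ p, ℓ (f p.1) p.2 ∂μ) ↔
    (∀ f : X → ℝ,
        ∫ p, ((1 - η) * ℓ (fstar p.1) p.2 + η * ℓ (fstar p.1) (!p.2)) ∂μ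
          ≤ ∫ p, ((1 - η) * ℓ (f p.1) p.2 + η * ℓ (f p.1) (!p.2)) ∂μ) := by
  have key : ∀ f : X → ℝ,
      ∫ p, ((1 - η) * ℓ (f p.1) p.2 + η * ℓ (f p.1) (!p.2)) ∂μ
        = (1 - 2 * η) * ∫ p, ℓ (f p.1) p.2 ∂μ + η * C := by
    intro f
    have hpt : ∀ p : X × Bool,
        (1 - η) * ℓ (f p.1) p.2 + η * ℓ (f p.1) (!p.2)
          = (1 - 2 * η) * ℓ (f p.1) p.2 + η * C := by
      intro p
      have h := hsym (f p.1)
      cases p.2 <;> simp only [Bool.not_false, Bool.not_true] <;> rw [← h] <;> ring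
    calc ∫ p, ((1 - η) * ℓ (f p.1) p.2 + η * ℓ (f p.1) (!p.2)) ∂μ
        = ∫ p, ((1 - 2 * η) * ℓ (f p.1) p.2 + η * C) ∂μ := by
          exact integral_congr_ae (Filter.Eventually.of_forall hpt)
      _ = (1 - 2 * η) * ∫ p, ℓ (f p.1) p.2 ∂μ + η * C := by
          rw [integral_add ((hint f).const_mul _) (integrable_const _),
            MeasureTheory.integral_const_mul, integral_const]
          simp
  have hpos : (0 : ℝ) < 1 - 2 * η := by linarith
  constructor
  · intro h f
    rw [key, key]
    have := h f
    nlinarith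
  · intro h f
    have := h f
    rw [key, key] at this
    nlinarith
end

section
/- Let ℓ : ℝ × {0,1} → ℝ be symmetric with constant C, and let 0 ≤ η < 1/2. Then for any two predictors f, g, the difference of noisy risks satisfies R_η(f) − R_η(g) = (1 − 2η)·(R(f) − R(g)). In particular, the noisy risk preserves the strict ordering of predictors by clean risk: R(f) < R(g) implies R_η(f) < R_η(g). -/
/-!
Symmetry gives `ℓ z (!y) = C - ℓ z y`, so pointwise the noisy loss is `(1 - 2η) ℓ z y + η C`.
Integrating, the constant `η C` cancels in risk differences, and the factor `1 - 2η` is positive.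
-/

open MeasureTheory

/-- The expected loss at `(z, y)` when the label is flipped with probability `η`. -/
def noisyLoss {Z : Type*} (ℓ : Z → Bool → ℝ) (η : ℝ) (z : Z) (y : Bool) : ℝ :=
  (1 - η) * ℓ z y + η * ℓ z (!y)

lemma noisyLoss_eq_of_symmetric {Z : Type*} {ℓ : Z → Bool → ℝ} {C : ℝ}
    (hsym : ∀ z, ℓ z false + ℓ z true = C) (η : ℝ) (z : Z) (y : Bool) :
    noisyLoss ℓ η z y = (1 - 2 * η) * ℓ z y + η * C := by
  have h := hsym z
  cases y <;> simp only [noisyLoss, Bool.not_false, Bool.not_true] <;> linear_combination η * h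

lemma integral_noisyLoss_of_symmetric {X : Type*} [MeasurableSpace X]
    (μ : Measure (X × Bool)) [IsFiniteMeasure μ]
    {ℓ : ℝ → Bool → ℝ} {C : ℝ} (hsym : ∀ z, ℓ z false + ℓ z true = C) (η : ℝ) {f : X → ℝ}
    (hf : Integrable (fun p : X × Bool => ℓ (f p.1) p.2) μ) :
    ∫ p, noisyLoss ℓ η (f p.1) p.2 ∂μ
      = (1 - 2 * η) * ∫ p, ℓ (f p.1) p.2 ∂μ + μ.real Set.univ * (η * C) := by
  simp only [noisyLoss_eq_of_symmetric hsym]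
  rw [integral_add (hf.const_mul _) (integrable_const _), integral_const_mul, integral_const,
    smul_eq_mul]

theorem noisy_risk_preserves_order_general {X : Type*} [MeasurableSpace X]
    (μ : Measure (X × Bool)) [IsProbabilityMeasure μ]
    (ℓ : ℝ → Bool → ℝ) (C : ℝ) (hsym : ∀ z, ℓ z false + ℓ z true = C)
    (η : ℝ) (hη : η < 1 / 2)
    (f g : X → ℝ)
    (hf : Integrable (fun p : X × Bool => ℓ (f p.1) p.2) μ)
    (hg : Integrable (fun p : X × Bool => ℓ (g p.1) p.2) μ) :
    ((∫ p, ((1 - η) * ℓ (f p.1) p.2 + η * ℓ (f p.1) (!p.2)) ∂μ) -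
        ∫ p, ((1 - η) * ℓ (g p.1) p.2 + η * ℓ (g p.1) (!p.2)) ∂μ
      = (1 - 2 * η) *
          ((∫ p, ℓ (f p.1) p.2 ∂μ) - ∫ p, ℓ (g p.1) p.2 ∂μ)) ∧
    ((∫ p, ℓ (f p.1) p.2 ∂μ) < (∫ p, ℓ (g p.1) p.2 ∂μ) →
      (∫ p, ((1 - η) * ℓ (f p.1) p.2 + η * ℓ (f p.1) (!p.2)) ∂μ) <
        ∫ p, ((1 - η) * ℓ (g p.1) p.2 + η * ℓ (g p.1) (!p.2)) ∂μ) := by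
  have hRf := integral_noisyLoss_of_symmetric μ hsym η hf
  have hRg := integral_noisyLoss_of_symmetric μ hsym η hg
  simp only [noisyLoss] at hRf hRg
  rw [hRf, hRg]
  refine ⟨by ring, fun hlt => ?_⟩
  have hscale : 0 < 1 - 2 * η := by linarith
  gcongr

/-- For a symmetric loss and uniform label noise of rate `η < 1/2`, the noisy-risk
difference is `(1-2η)` times the clean-risk difference, and the strict risk
ordering of predictors is preserved. -/
theorem noisy_risk_preserves_order {X : Type*} [MeasurableSpace X]
    (μ : Measure (X × Bool)) [IsProbabilityMeasure μ]
    (ℓ : ℝ → Bool → ℝ) (C : ℝ) (hsym : ∀ z, ℓ z false + ℓ z true = C)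
    (η : ℝ) (hη0 : 0 ≤ η) (hη : η < 1 / 2)
    (f g : X → ℝ)
    (hf : Integrable (fun p : X × Bool => ℓ (f p.1) p.2) μ)
    (hg : Integrable (fun p : X × Bool => ℓ (g p.1) p.2) μ) :
    ((∫ p, ((1 - η) * ℓ (f p.1) p.2 + η * ℓ (f p.1) (!p.2)) ∂μ) -
        ∫ p, ((1 - η) * ℓ (g p.1) p.2 + η * ℓ (g p.1) (!p.2)) ∂μ
      = (1 - 2 * η) *
          ((∫ p, ℓ (f p.1) p.2 ∂μ) - ∫ p, ℓ (g p.1) p.2 ∂μ)) ∧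
    ((∫ p, ℓ (f p.1) p.2 ∂μ) < (∫ p, ℓ (g p.1) p.2 ∂μ) →
      (∫ p, ((1 - η) * ℓ (f p.1) p.2 + η * ℓ (f p.1) (!p.2)) ∂μ) <
        ∫ p, ((1 - η) * ℓ (g p.1) p.2 + η * ℓ (g p.1) (!p.2)) ∂μ) :=
  noisy_risk_preserves_order_general μ ℓ C hsym η hη f g hf hg
end
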